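/- Let q : Aut(𝒢₂) → GL(H) be the homomorphism induced by the action of automorphisms on the abelianization 𝒢₂/[𝒢₂, 𝒢₂] ≅ H, let Inn(𝒢₂) ⊆ Aut(𝒢₂) be the group of inner automorphisms, and let Out(𝒢₂) = Aut(𝒢₂)/Inn(𝒢₂). Let SpOut(𝒢₂) ⊆ Out(𝒢₂) be the image of q⁻¹(Sp(H)), and let N ⊆ Hom_R(H, Λ²H) be the submodule consisting of the maps f_b : a ↦ a∧b for b ∈ H (N is stable under the GL(H)-action (A·f)(u) = Λ²A(f(A⁻¹u))). Then, under the isomorphism Aut(𝒢₂) ≅ Hom_R(H, Λ²H) ⋊ GL(H) given by (f, A) ↦ ((ξ, u) ↦ (2·f(Au) + Λ²A(ξ), Au)), the inner automorphism group Inn(𝒢₂) corresponds to N × {id_H}, and SpOut(𝒢₂) is isomorphic to the semidirect product (Hom_R(H, Λ²H)/N) ⋊ Sp(H). -/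

import Mathlib

namespace Paper

open ExteriorAlgebra

open scoped TensorProduct

variable {R : Type*} [CommRing R] {H : Type*} [AddCommGroup H] [Module R H]

theorem wedge_mem (v w : H) : ι R v * ι R w ∈ ⋀[R]^2 H := by
  rw [show (⋀[R]^2 H) = LinearMap.range (ι R (M := H)) * LinearMap.range (ι R (M := H)) from
    sq _]
  exact Submodule.mul_mem_mul (LinearMap.mem_range_self _ v) (LinearMap.mem_range_self _ w)

/-- The wedge product `H × H → Λ²H` as a bilinear map. -/
noncomputable def wedge : H →ₗ[R] H →ₗ[R] ↥(⋀[R]^2 H) :=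
  LinearMap.mk₂ R (fun v w => ⟨ι R v * ι R w, wedge_mem v w⟩)
    (fun v v' w => Subtype.ext (by simp [add_mul]))
    (fun c v w => Subtype.ext (by simp [smul_mul_assoc]))
    (fun v w w' => Subtype.ext (by simp [mul_add]))
    (fun c v w => Subtype.ext (by simp [mul_smul_comm]))

theorem wedge_self (v : H) : wedge (R := R) v v = 0 :=
  Subtype.ext (ι_sq_zero v)

/-- The symplectic form on `H` determined by a basis `e₁, …, e_{2g}`,
with `⟨e_{2i-1}, e_{2i}⟩ = 1 = −⟨e_{2i}, e_{2i-1}⟩`. -/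
noncomputable def sympForm {g : ℕ} (e : Module.Basis (Fin (2 * g)) R H) : H →ₗ[R] H →ₗ[R] R :=
  ∑ i : Fin g,
    ((e.coord ⟨2 * i, by have := i.isLt; omega⟩).smulRight
        (e.coord ⟨2 * i + 1, by have := i.isLt; omega⟩) -
      (e.coord ⟨2 * i + 1, by have := i.isLt; omega⟩).smulRight
        (e.coord ⟨2 * i, by have := i.isLt; omega⟩))

/-- The submodule `N = {f_b : a ↦ a ∧ b | b ∈ H} ⊆ Hom(H, Λ²H)`. -/
noncomputable def nSub (R : Type*) [CommRing R] (H : Type*) [AddCommGroup H] [Module R H] :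
    Submodule R (H →ₗ[R] ↥(⋀[R]^2 H)) :=
  LinearMap.range (LinearMap.flip (wedge (R := R) (H := H)))

section G2

variable [Invertible (2 : R)]

/-- The group `𝒢₂ = Λ²H × H` with multiplication
`(a, v) · (b, w) = (½ v∧w + a + b, v + w)`. -/
noncomputable instance g2Group : Group (↥(⋀[R]^2 H) × H) where
  mul x y := (⅟(2 : R) • wedge (R := R) x.2 y.2 + x.1 + y.1, x.2 + y.2)
  one := (0, 0)
  inv x := (-x.1, -x.2)
  mul_assoc x y z := by
    refine Prod.ext ?_ ?_
    · show ⅟(2 : R) • wedge (R := R) (x.2 + y.2) z.2 +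
          (⅟(2 : R) • wedge (R := R) x.2 y.2 + x.1 + y.1) + z.1 =
        ⅟(2 : R) • wedge (R := R) x.2 (y.2 + z.2) + x.1 +
          (⅟(2 : R) • wedge (R := R) y.2 z.2 + y.1 + z.1)
      simp only [map_add, LinearMap.add_apply, smul_add]
      abel
    · exact add_assoc _ _ _
  one_mul x := by
    have : (⅟(2 : R) • wedge (R := R) (0 : H) x.2 + 0 + x.1, (0 : H) + x.2) = x := by
      simp
    exact this
  mul_one x := by
    have : (⅟(2 : R) • wedge (R := R) x.2 (0 : H) + x.1 + 0, x.2 + (0 : H)) = x := by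
      simp
    exact this
  inv_mul_cancel x := by
    have : (⅟(2 : R) • wedge (R := R) (-x.2) x.2 + -x.1 + x.1, -x.2 + x.2) =
        ((0, 0) : ↥(⋀[R]^2 H) × H) := by
      simp [wedge_self]
    exact this

end G2

theorem map_exteriorPower_le (f : H →ₗ[R] H) (n : ℕ) :
    Submodule.map (ExteriorAlgebra.map f).toLinearMap (⋀[R]^n H) ≤ ⋀[R]^n H := by
  rw [show ((⋀[R]^n H : Submodule R (ExteriorAlgebra R H))) =
      (LinearMap.range (ι R (M := H))) ^ n from rfl, Submodule.map_pow]
  have h1 : Submodule.map (ExteriorAlgebra.map f).toLinearMap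
      (LinearMap.range (ι R (M := H))) ≤ LinearMap.range (ι R (M := H)) := by
    intro x hx
    rw [Submodule.mem_map] at hx
    obtain ⟨y, hy, rfl⟩ := hx
    rw [LinearMap.mem_range] at hy
    obtain ⟨v, rfl⟩ := hy
    exact ⟨f v, (map_apply_ι f v).symm⟩
  induction n with
  | zero => simp
  | succ n ih =>
      rw [pow_succ, pow_succ]
      exact mul_le_mul' ih h1

/-- The endomorphism `Λ²f` of `Λ²H` induced by an endomorphism `f` of `H`. -/
noncomputable def map2 (f : H →ₗ[R] H) : ↥(⋀[R]^2 H) →ₗ[R] ↥(⋀[R]^2 H) :=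
  (ExteriorAlgebra.map f).toLinearMap.restrict (p := ⋀[R]^2 H) (q := ⋀[R]^2 H)
    (fun x hx => map_exteriorPower_le f 2 (Submodule.mem_map_of_mem hx))

/-- The inner automorphisms form a normal subgroup of `Aut(G)`. -/
instance conjRangeNormal {G : Type*} [Group G] : (MulAut.conj (G := G)).range.Normal := by
  constructor
  intro n hn φ
  obtain ⟨g, rfl⟩ := hn
  refine ⟨φ g, ?_⟩
  ext x
  show MulAut.conj (φ g) x = φ (MulAut.conj g (φ⁻¹ x))
  simp only [MulAut.conj_apply, map_mul, map_inv]
  rw [MulAut.apply_inv_self]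

/-- The symplectic group `Sp(H)` of `R`-linear automorphisms preserving the symplectic
form. -/
noncomputable def spSubgroup {g : ℕ} (e : Module.Basis (Fin (2 * g)) R H) : Subgroup (H ≃ₗ[R] H) where
  carrier := {A | ∀ v w : H, sympForm e (A v) (A w) = sympForm e v w}
  one_mem' := by intro v w; rfl
  mul_mem' := by
    intro A B hA hB v w
    have h1 : ∀ x : H, (A * B) x = A (B x) := fun x => rfl
    rw [h1, h1, hA, hB]
  inv_mem' := by
    intro A hA v w
    have h1 : ∀ x : H, A (A⁻¹ x) = x := fun x => A.apply_symm_apply x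
    conv_lhs => rw [← hA (A⁻¹ v) (A⁻¹ w), h1, h1]

/-- Helper instance: quotients of the `R`-module `Hom(H, Λ²H)`. -/
noncomputable instance hqHom :
    HasQuotient (H →ₗ[R] ↥(⋀[R]^2 H)) (Submodule R (H →ₗ[R] ↥(⋀[R]^2 H))) :=
  @Submodule.hasQuotient R (H →ₗ[R] ↥(⋀[R]^2 H)) _ _ _

/-! The inner automorphism `conj (b, w)` of `𝒢₂` is `(ξ, u) ↦ (w ∧ u + ξ, u)`, which is the
automorphism with parameters `(f, A) = (u ↦ ½ w ∧ u, 1)`; since `2` is invertible every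
`f_b = (· ∧ b)` arises this way, so `Inn(𝒢₂) = N × {1}`. Consequently two automorphisms
`(f, A)` and `(f', A')` agree modulo inner ones exactly when `A = A'` and `f ≡ f' (mod N)`
(the twisted action of `GL(H)` preserves `N`), and `(f, A) ↦ [(f, A)]` descends to an injective
multiplicative map from `(Hom(H, Λ²H)/N) ⋊ Sp(H)` onto the image of `q⁻¹(Sp(H))` in
`Out(𝒢₂)`. -/

theorem exists_equiv_mul_eq_of_injective {G X : Type*} [Group G] {K : Subgroup G}
    (mulX : X → X → X) {Φ : X → G} (hΦ : Function.Injective Φ) (hK : (K : Set G) = Set.range Φ)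
    (hmul : ∀ a b, Φ (mulX a b) = Φ a * Φ b) :
    ∃ Ψ : K ≃ X, ∀ x y, Ψ (x * y) = mulX (Ψ x) (Ψ y) := by
  let Φ' : X → K := fun a => ⟨Φ a, by rw [← SetLike.mem_coe, hK]; exact Set.mem_range_self a⟩
  have hΦ' : Function.Bijective Φ' := by
    refine ⟨fun a b h => hΦ (congrArg Subtype.val h), fun x => ?_⟩
    obtain ⟨a, ha⟩ : (x : G) ∈ Set.range Φ := hK ▸ x.2
    exact ⟨a, Subtype.ext ha⟩
  let Ψ := (Equiv.ofBijective Φ' hΦ').symm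
  have hΦΨ : ∀ x, Φ (Ψ x) = x := fun x => congrArg Subtype.val (Ψ.symm_apply_apply x)
  refine ⟨Ψ, fun x y => hΦ ?_⟩
  rw [hmul, hΦΨ, hΦΨ, hΦΨ, Subgroup.coe_mul]

theorem wedge_swap (v w : H) : wedge (R := R) v w = -wedge w v :=
  eq_neg_of_add_eq_zero_left (Subtype.ext (ι_add_mul_swap v w))

theorem map2_wedge (f : H →ₗ[R] H) (v w : H) :
    map2 f (wedge (R := R) v w) = wedge (f v) (f w) :=
  Subtype.ext (by simp [map2, wedge])

theorem map2_id : map2 (R := R) (H := H) LinearMap.id = LinearMap.id :=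
  LinearMap.ext fun x => Subtype.ext (by simp [map2])

theorem map2_comp (f f' : H →ₗ[R] H) : map2 (f ∘ₗ f') = map2 f ∘ₗ map2 f' :=
  LinearMap.ext fun x => Subtype.ext (by simp [map2, ← map_comp_map])

theorem map2_comp_comp_symm_mem_nSub {A : H ≃ₗ[R] H} {f : H →ₗ[R] ↥(⋀[R]^2 H)} (hf : f ∈ nSub R H) :
    map2 (A : H →ₗ[R] H) ∘ₗ f ∘ₗ (A.symm : H →ₗ[R] H) ∈ nSub R H := by
  obtain ⟨b, rfl⟩ := hf
  refine ⟨A b, LinearMap.ext fun u => ?_⟩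
  simp [map2_wedge]

theorem map2_comp_comp_symm_mem_nSub_iff (A : H ≃ₗ[R] H) (f : H →ₗ[R] ↥(⋀[R]^2 H)) :
    map2 (A : H →ₗ[R] H) ∘ₗ f ∘ₗ (A.symm : H →ₗ[R] H) ∈ nSub R H ↔ f ∈ nSub R H := by
  refine ⟨fun hf => ?_, map2_comp_comp_symm_mem_nSub⟩
  convert map2_comp_comp_symm_mem_nSub (A := A.symm) hf using 1
  rw [LinearEquiv.symm_symm, ← LinearMap.comp_assoc, ← LinearMap.comp_assoc, ← map2_comp,
    LinearEquiv.symm_comp, map2_id, LinearMap.id_comp, LinearMap.comp_assoc,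
    LinearEquiv.symm_comp, LinearMap.comp_id]

section TwoInvertible

variable [Invertible (2 : R)]

theorem mem_nSub_iff_exists_two_smul {f : H →ₗ[R] ↥(⋀[R]^2 H)} :
    f ∈ nSub R H ↔ ∃ w : H, ∀ u, (2 : R) • f u = wedge w u := by
  constructor
  · rintro ⟨b, rfl⟩
    exact ⟨-(2 : R) • b, fun u => by simp [wedge_swap b u]⟩
  · rintro ⟨w, hw⟩
    refine ⟨-⅟(2 : R) • w, LinearMap.ext fun u => ?_⟩
    rw [LinearMap.flip_apply, map_smul, wedge_swap, ← hw, smul_neg, neg_smul, neg_neg,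
      smul_smul, invOf_mul_self, one_smul]

theorem conj_apply (b ξ : ↥(⋀[R]^2 H)) (w u : H) :
    MulAut.conj ((b, w) : ↥(⋀[R]^2 H) × H) (ξ, u) = (wedge w u + ξ, u) := by
  show (⅟(2 : R) • wedge (w + u) (-w) + (⅟(2 : R) • wedge w u + b + ξ) + -b, w + u + -w) = _
  have hw : wedge (R := R) (w + u) (-w) = wedge w u := by simp [wedge_self, wedge_swap u w]
  rw [hw, Prod.mk.injEq]
  refine ⟨?_, by abel⟩
  rw [show ⅟(2 : R) • wedge w u + (⅟(2 : R) • wedge w u + b + ξ) + -b =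
      (⅟(2 : R) + ⅟(2 : R)) • wedge w u + ξ by rw [add_smul]; abel,
    invOf_two_add_invOf_two, one_smul]

variable (Θ : ((H →ₗ[R] ↥(⋀[R]^2 H)) × (H ≃ₗ[R] H)) ≃ MulAut (↥(⋀[R]^2 H) × H))

def AutParamApply : Prop :=
  ∀ (f : H →ₗ[R] ↥(⋀[R]^2 H)) (A : H ≃ₗ[R] H) (ξ : ↥(⋀[R]^2 H)) (u : H),
    Θ (f, A) (ξ, u) = ((2 : R) • f (A u) + map2 (R := R) (A : H →ₗ[R] H) ξ, A u)

def AutParamMul : Prop :=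
  ∀ (f f' : H →ₗ[R] ↥(⋀[R]^2 H)) (A A' : H ≃ₗ[R] H),
    Θ (f' + map2 (R := R) (A' : H →ₗ[R] H) ∘ₗ f ∘ₗ (A'.symm : H →ₗ[R] H), A' * A) =
      Θ (f', A') * Θ (f, A)

variable {Θ}

theorem AutParamApply.eq_conj_iff (hΘ : AutParamApply Θ) (f : H →ₗ[R] ↥(⋀[R]^2 H))
    (A : H ≃ₗ[R] H) (b : ↥(⋀[R]^2 H)) (w : H) :
    Θ (f, A) = MulAut.conj (b, w) ↔ A = 1 ∧ ∀ u, (2 : R) • f u = wedge w u := by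
  constructor
  · intro h
    have hu : ∀ u, Θ (f, A) (0, u) = MulAut.conj (b, w) (0, u) := fun u => by rw [h]
    simp only [hΘ f A, conj_apply, map_zero, add_zero, Prod.mk.injEq] at hu
    obtain rfl : A = 1 := LinearEquiv.ext fun u => (hu u).2
    exact ⟨rfl, fun u => (hu u).1⟩
  · rintro ⟨rfl, hf⟩
    refine MulEquiv.ext fun ⟨ξ, u⟩ => ?_
    rw [hΘ f 1, conj_apply]
    show ((2 : R) • f u + map2 LinearMap.id ξ, u) = _
    rw [map2_id, hf]
    rfl

theorem AutParamApply.mem_range_conj_iff (hΘ : AutParamApply Θ) (f : H →ₗ[R] ↥(⋀[R]^2 H))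
    (A : H ≃ₗ[R] H) :
    Θ (f, A) ∈ (MulAut.conj (G := ↥(⋀[R]^2 H) × H)).range ↔ f ∈ nSub R H ∧ A = 1 := by
  simp only [MonoidHom.mem_range, Prod.exists, eq_comm (b := Θ (f, A)), hΘ.eq_conj_iff,
    mem_nSub_iff_exists_two_smul]
  exact ⟨fun ⟨_, w, hA, hw⟩ => ⟨⟨w, hw⟩, hA⟩, fun ⟨⟨w, hw⟩, hA⟩ => ⟨0, w, hA, hw⟩⟩

/-- The map `q : Aut(𝒢₂) → GL(H)`, read off in the coordinates `Θ`. -/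
noncomputable def AutParamMul.linPart (hΘ : AutParamMul Θ) :
    MulAut (↥(⋀[R]^2 H) × H) →* (H ≃ₗ[R] H) :=
  MonoidHom.mk' (fun φ => (Θ.symm φ).2) fun φ ψ => by
    obtain ⟨⟨f, A⟩, rfl⟩ := Θ.surjective φ
    obtain ⟨⟨f', A'⟩, rfl⟩ := Θ.surjective ψ
    rw [← hΘ, Equiv.symm_apply_apply, Equiv.symm_apply_apply, Equiv.symm_apply_apply]

theorem AutParamMul.linPart_apply (hΘ : AutParamMul Θ) (f : H →ₗ[R] ↥(⋀[R]^2 H))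
    (A : H ≃ₗ[R] H) : hΘ.linPart (Θ (f, A)) = A :=
  congrArg Prod.snd (Θ.symm_apply_apply (f, A))

theorem mk_eq_mk_iff (hΘ₁ : AutParamApply Θ) (hΘ₂ : AutParamMul Θ)
    (f f' : H →ₗ[R] ↥(⋀[R]^2 H)) (A A' : H ≃ₗ[R] H) :
    (QuotientGroup.mk (Θ (f, A)) : MulAut (↥(⋀[R]^2 H) × H) ⧸ (MulAut.conj).range) =
        QuotientGroup.mk (Θ (f', A')) ↔
      A = A' ∧ (Submodule.Quotient.mk f : _ ⧸ nSub R H) = Submodule.Quotient.mk f' := by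
  obtain ⟨⟨g, B⟩, hgB⟩ := Θ.surjective ((Θ (f, A))⁻¹ * Θ (f', A'))
  have h : Θ (f', A') = Θ (f + map2 (A : H →ₗ[R] H) ∘ₗ g ∘ₗ (A.symm : H →ₗ[R] H), A * B) := by
    rw [hΘ₂, hgB, mul_inv_cancel_left]
  obtain ⟨rfl, rfl⟩ := Prod.ext_iff.1 (Θ.injective h)
  rw [QuotientGroup.eq, ← hgB, hΘ₁.mem_range_conj_iff, Submodule.Quotient.eq',
    neg_add_cancel_left, map2_comp_comp_symm_mem_nSub_iff, left_eq_mul, and_comm]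

noncomputable def outMap (hΘ₁ : AutParamApply Θ) (hΘ₂ : AutParamMul Θ)
    (S : Subgroup (H ≃ₗ[R] H)) (x : ((H →ₗ[R] ↥(⋀[R]^2 H)) ⧸ nSub R H) × S) :
    MulAut (↥(⋀[R]^2 H) × H) ⧸ (MulAut.conj).range :=
  Quotient.liftOn' x.1 (fun f => QuotientGroup.mk (Θ (f, x.2))) fun f f' h =>
    (mk_eq_mk_iff hΘ₁ hΘ₂ f f' x.2 x.2).2 ⟨rfl, Quotient.sound' h⟩

variable {hΘ₁ : AutParamApply Θ} {hΘ₂ : AutParamMul Θ} {S : Subgroup (H ≃ₗ[R] H)}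

theorem outMap_mk (f : H →ₗ[R] ↥(⋀[R]^2 H)) (A : S) :
    outMap hΘ₁ hΘ₂ S (Submodule.Quotient.mk f, A) = QuotientGroup.mk (Θ (f, A)) :=
  rfl

theorem outMap_injective : Function.Injective (outMap hΘ₁ hΘ₂ S) := by
  rintro ⟨q, A⟩ ⟨q', A'⟩ h
  obtain ⟨f, rfl⟩ := Submodule.Quotient.mk_surjective _ q
  obtain ⟨f', rfl⟩ := Submodule.Quotient.mk_surjective _ q'
  obtain ⟨hA, hf⟩ := (mk_eq_mk_iff hΘ₁ hΘ₂ f f' A A').1 h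
  exact Prod.ext hf (Subtype.ext hA)

theorem range_outMap :
    Set.range (outMap hΘ₁ hΘ₂ S) =
      ((S.comap hΘ₂.linPart).map (QuotientGroup.mk' (MulAut.conj).range) : Set _) := by
  ext c
  constructor
  · rintro ⟨⟨q, A⟩, rfl⟩
    obtain ⟨f, rfl⟩ := Submodule.Quotient.mk_surjective _ q
    exact ⟨Θ (f, A), by simp [hΘ₂.linPart_apply], rfl⟩
  · rintro ⟨φ, hφ, rfl⟩
    obtain ⟨⟨f, A⟩, rfl⟩ := Θ.surjective φ
    rw [SetLike.mem_coe, Subgroup.mem_comap, hΘ₂.linPart_apply] at hφ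
    exact ⟨(Submodule.Quotient.mk f, ⟨A, hφ⟩), rfl⟩

theorem closure_eq_range_outMap :
    (Subgroup.closure {c : MulAut (↥(⋀[R]^2 H) × H) ⧸ (MulAut.conj).range |
        ∃ (f : H →ₗ[R] ↥(⋀[R]^2 H)) (A : H ≃ₗ[R] H), A ∈ S ∧ c = QuotientGroup.mk (Θ (f, A))} :
      Set _) = Set.range (outMap hΘ₁ hΘ₂ S) := by
  have generators : {c : MulAut (↥(⋀[R]^2 H) × H) ⧸ (MulAut.conj).range |
      ∃ (f : H →ₗ[R] ↥(⋀[R]^2 H)) (A : H ≃ₗ[R] H), A ∈ S ∧ c = QuotientGroup.mk (Θ (f, A))} =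
      Set.range (outMap hΘ₁ hΘ₂ S) := by
    ext c
    constructor
    · rintro ⟨f, A, hA, rfl⟩
      exact ⟨(Submodule.Quotient.mk f, ⟨A, hA⟩), rfl⟩
    · rintro ⟨⟨q, A⟩, rfl⟩
      obtain ⟨f, rfl⟩ := Submodule.Quotient.mk_surjective _ q
      exact ⟨f, A, A.2, rfl⟩
  rw [generators, range_outMap, Subgroup.closure_eq]

theorem outMap_semidirect_mul
    (ρ : (H ≃ₗ[R] H) → ((H →ₗ[R] ↥(⋀[R]^2 H)) ⧸ nSub R H) → ((H →ₗ[R] ↥(⋀[R]^2 H)) ⧸ nSub R H))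
    (hρ : ∀ (A : H ≃ₗ[R] H) (f : H →ₗ[R] ↥(⋀[R]^2 H)), ρ A (Submodule.Quotient.mk f) =
      Submodule.Quotient.mk (map2 (R := R) (A : H →ₗ[R] H) ∘ₗ f ∘ₗ (A.symm : H →ₗ[R] H)))
    (a b : ((H →ₗ[R] ↥(⋀[R]^2 H)) ⧸ nSub R H) × S) :
    outMap hΘ₁ hΘ₂ S (a.1 + ρ a.2 b.1, a.2 * b.2) =
      outMap hΘ₁ hΘ₂ S a * outMap hΘ₁ hΘ₂ S b := by
  obtain ⟨q, A⟩ := a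
  obtain ⟨q', A'⟩ := b
  obtain ⟨f, rfl⟩ := Submodule.Quotient.mk_surjective _ q
  obtain ⟨f', rfl⟩ := Submodule.Quotient.mk_surjective _ q'
  rw [hρ, ← Submodule.Quotient.mk_add, outMap_mk, outMap_mk, outMap_mk, ← QuotientGroup.mk_mul,
    Subgroup.coe_mul, hΘ₂]

end TwoInvertible

theorem stmt9_general {R : Type*} [CommRing R] [Invertible (2 : R)]
    {H : Type*} [AddCommGroup H] [Module R H] {g : ℕ}
    (e : Module.Basis (Fin (2 * g)) R H)
    -- the isomorphism of Statement 8: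
    (Θ : ((H →ₗ[R] ↥(⋀[R]^2 H)) × (H ≃ₗ[R] H)) ≃ MulAut (↥(⋀[R]^2 H) × H))
    (hΘ1 : ∀ (f : H →ₗ[R] ↥(⋀[R]^2 H)) (A : H ≃ₗ[R] H) (ξ : ↥(⋀[R]^2 H)) (u : H),
      Θ (f, A) (ξ, u) = ((2 : R) • f (A u) + map2 (R := R) (A : H →ₗ[R] H) ξ, A u))
    (hΘ2 : ∀ (f f' : H →ₗ[R] ↥(⋀[R]^2 H)) (A A' : H ≃ₗ[R] H),
      Θ (f' + map2 (R := R) (A' : H →ₗ[R] H) ∘ₗ f ∘ₗ (A'.symm : H →ₗ[R] H), A' * A) =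
        Θ (f', A') * Θ (f, A)) :
    -- (a) `Inn(𝒢₂)` corresponds to `N × {id_H}`:
    (∀ (f : H →ₗ[R] ↥(⋀[R]^2 H)) (A : H ≃ₗ[R] H),
      Θ (f, A) ∈ (MulAut.conj (G := ↥(⋀[R]^2 H) × H)).range ↔
        (f ∈ nSub R H ∧ A = 1)) ∧
    -- (b) `SpOut(𝒢₂) ≅ (Hom(H, Λ²H)/N) ⋊ Sp(H)`:
    (∀ ρ : (H ≃ₗ[R] H) →
        ((H →ₗ[R] ↥(⋀[R]^2 H)) ⧸ nSub R H) →
        ((H →ₗ[R] ↥(⋀[R]^2 H)) ⧸ nSub R H),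
      (∀ (A : H ≃ₗ[R] H) (f : H →ₗ[R] ↥(⋀[R]^2 H)),
        ρ A (Submodule.Quotient.mk f) =
          Submodule.Quotient.mk (map2 (R := R) (A : H →ₗ[R] H) ∘ₗ f ∘ₗ (A.symm : H →ₗ[R] H))) →
      ∃ Ψ : ↥(Subgroup.closure
          {c : MulAut (↥(⋀[R]^2 H) × H) ⧸ (MulAut.conj (G := ↥(⋀[R]^2 H) × H)).range |
            ∃ (f : H →ₗ[R] ↥(⋀[R]^2 H)) (A : H ≃ₗ[R] H),
              A ∈ spSubgroup e ∧ c = QuotientGroup.mk (Θ (f, A))}) ≃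
          (((H →ₗ[R] ↥(⋀[R]^2 H)) ⧸ nSub R H) ×
            ↥(spSubgroup e)),
        ∀ x y, Ψ (x * y) =
          ((Ψ x).1 + ρ ((Ψ x).2 : H ≃ₗ[R] H) (Ψ y).1, (Ψ x).2 * (Ψ y).2)) := by
  refine ⟨AutParamApply.mem_range_conj_iff hΘ1, fun ρ hρ => ?_⟩
  exact exists_equiv_mul_eq_of_injective (Φ := outMap hΘ1 hΘ2 (spSubgroup e)) _
    outMap_injective closure_eq_range_outMap (outMap_semidirect_mul ρ hρ)

/-- Under the isomorphism `Aut(𝒢₂) ≅ Hom(H, Λ²H) ⋊ GL(H)` of Statement 8,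
the inner automorphism group `Inn(𝒢₂)` corresponds to `N × {id}`, where
`N = {f_b : a ↦ a ∧ b | b ∈ H}`; and `SpOut(𝒢₂)`, the image in `Out(𝒢₂) = Aut(𝒢₂)/Inn(𝒢₂)`
of the preimage of `Sp(H)`, is isomorphic to the semidirect product
`(Hom(H, Λ²H)/N) ⋊ Sp(H)` (with the induced action). -/
theorem stmt9 (P : Ideal ℤ) [P.IsPrime] (hP2 : (2 : ℤ) ∉ P) (hP3 : (3 : ℤ) ∉ P)
    {R : Type*} [CommRing R] [Algebra ℤ R] [IsLocalization.AtPrime R P] [Invertible (2 : R)]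
    {H : Type*} [AddCommGroup H] [Module R H] {g : ℕ} (hg : 1 ≤ g)
    (e : Module.Basis (Fin (2 * g)) R H)
    -- the isomorphism of Statement 8:
    (Θ : ((H →ₗ[R] ↥(⋀[R]^2 H)) × (H ≃ₗ[R] H)) ≃ MulAut (↥(⋀[R]^2 H) × H))
    (hΘ1 : ∀ (f : H →ₗ[R] ↥(⋀[R]^2 H)) (A : H ≃ₗ[R] H) (ξ : ↥(⋀[R]^2 H)) (u : H),
      Θ (f, A) (ξ, u) = ((2 : R) • f (A u) + map2 (R := R) (A : H →ₗ[R] H) ξ, A u))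
    (hΘ2 : ∀ (f f' : H →ₗ[R] ↥(⋀[R]^2 H)) (A A' : H ≃ₗ[R] H),
      Θ (f' + map2 (R := R) (A' : H →ₗ[R] H) ∘ₗ f ∘ₗ (A'.symm : H →ₗ[R] H), A' * A) =
        Θ (f', A') * Θ (f, A)) :
    -- (a) `Inn(𝒢₂)` corresponds to `N × {id_H}`:
    (∀ (f : H →ₗ[R] ↥(⋀[R]^2 H)) (A : H ≃ₗ[R] H),
      Θ (f, A) ∈ (MulAut.conj (G := ↥(⋀[R]^2 H) × H)).range ↔
        (f ∈ nSub R H ∧ A = 1)) ∧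
    -- (b) `SpOut(𝒢₂) ≅ (Hom(H, Λ²H)/N) ⋊ Sp(H)`:
    (∀ ρ : (H ≃ₗ[R] H) →
        ((H →ₗ[R] ↥(⋀[R]^2 H)) ⧸ nSub R H) →
        ((H →ₗ[R] ↥(⋀[R]^2 H)) ⧸ nSub R H),
      (∀ (A : H ≃ₗ[R] H) (f : H →ₗ[R] ↥(⋀[R]^2 H)),
        ρ A (Submodule.Quotient.mk f) =
          Submodule.Quotient.mk (map2 (R := R) (A : H →ₗ[R] H) ∘ₗ f ∘ₗ (A.symm : H →ₗ[R] H))) →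
      ∃ Ψ : ↥(Subgroup.closure
          {c : MulAut (↥(⋀[R]^2 H) × H) ⧸ (MulAut.conj (G := ↥(⋀[R]^2 H) × H)).range |
            ∃ (f : H →ₗ[R] ↥(⋀[R]^2 H)) (A : H ≃ₗ[R] H),
              A ∈ spSubgroup e ∧ c = QuotientGroup.mk (Θ (f, A))}) ≃
          (((H →ₗ[R] ↥(⋀[R]^2 H)) ⧸ nSub R H) ×
            ↥(spSubgroup e)),
        ∀ x y, Ψ (x * y) =
          ((Ψ x).1 + ρ ((Ψ x).2 : H ≃ₗ[R] H) (Ψ y).1, (Ψ x).2 * (Ψ y).2)) :=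
  stmt9_general e Θ hΘ1 hΘ2

end Paper
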